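/- Let Λ be a proper, source-free topological k-graph and fix n ∈ ℕ^k. If U ⊆ Λ^n is compact, then the cylinder set Z(U) = { x ∈ Λ^∞ : x(0,n) ∈ U } is compact in the infinite-path space Λ^∞; if U is precompact, then Z(U) is precompact. -/

import Mathlib

/-- A topological `k`-graph (Yeend): a small category, presented algebraically on
its (second-countable, locally compact, Hausdorff) space of morphisms with
objects identified with identity morphisms, together with a continuous degree
functor `d : Λ → ℕ^k` satisfying the unique factorisation property.  The range
map is continuous, the source map is a local homeomorphism, and composition
(defined on the set of composable pairs) is continuous and open. -/
structure TopKGraph (k : ℕ) where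
  M : Type
  ts : TopologicalSpace M
  t2 : @T2Space M ts
  lc : @LocallyCompactSpace M ts
  sc : @SecondCountableTopology M ts
  r : M → M
  s : M → M
  comp : M → M → M
  d : M → Fin k → ℕ
  rr : ∀ lam, r (r lam) = r lam
  sr : ∀ lam, s (r lam) = r lam
  rs : ∀ lam, r (s lam) = s lam
  ss' : ∀ lam, s (s lam) = s lam
  r_comp : ∀ {lam mu}, s lam = r mu → r (comp lam mu) = r lam
  s_comp : ∀ {lam mu}, s lam = r mu → s (comp lam mu) = s mu
  comp_assoc : ∀ {lam mu nu}, s lam = r mu → s mu = r nu →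
      comp (comp lam mu) nu = comp lam (comp mu nu)
  id_comp : ∀ lam, comp (r lam) lam = lam
  comp_id : ∀ lam, comp lam (s lam) = lam
  d_comp : ∀ {lam mu}, s lam = r mu → d (comp lam mu) = d lam + d mu
  d_r : ∀ lam, d (r lam) = 0
  d_s : ∀ lam, d (s lam) = 0
  continuous_r : @Continuous M M ts ts r
  continuous_s : @Continuous M M ts ts s
  isLocalHomeomorph_s : @IsLocalHomeomorph M M ts ts s
  continuousOn_comp : @ContinuousOn (M × M) M (@instTopologicalSpaceProd M M ts ts) ts
      (fun p => comp p.1 p.2) {p | s p.1 = r p.2}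
  isOpenMap_comp : ∀ V : Set (M × M), @IsOpen (M × M) (@instTopologicalSpaceProd M M ts ts) V →
      @IsOpen M ts ((fun p : M × M => comp p.1 p.2) '' (V ∩ {p | s p.1 = r p.2}))
  isOpen_deg : ∀ n : Fin k → ℕ, @IsOpen M ts {lam | d lam = n}
  factor : ∀ (lam : M) (m n : Fin k → ℕ), d lam = m + n →
      ∃! p : M × M, s p.1 = r p.2 ∧ comp p.1 p.2 = lam ∧ d p.1 = m ∧ d p.2 = n

attribute [instance] TopKGraph.ts TopKGraph.t2 TopKGraph.lc TopKGraph.sc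

variable {k : ℕ}

/-- An `s`-section: a set contained in an open set on which the source map is
injective (equivalently, since `s` is a local homeomorphism, on which `s`
restricts to a homeomorphism onto its image). -/
def TopKGraph.IsSSection (G : TopKGraph k) (W : Set G.M) : Prop :=
  ∃ U : Set G.M, IsOpen U ∧ W ⊆ U ∧ Set.InjOn G.s U

/-- A topological `k`-graph is proper if, for each `m ∈ ℕ^k`, the preimage under
`r|_{Λ^m}` of any compact set is compact. -/
def TopKGraph.Proper (G : TopKGraph k) : Prop :=
  ∀ (m : Fin k → ℕ) (K : Set G.M), IsCompact K →
    IsCompact {lam : G.M | G.d lam = m ∧ G.r lam ∈ K}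

/-- A topological `k`-graph is source-free if `vΛ^{e_i} ≠ ∅` for every vertex `v`
and every `i`. -/
def TopKGraph.SourceFree (G : TopKGraph k) : Prop :=
  ∀ v : G.M, G.r v = v → ∀ i : Fin k,
    ∃ lam : G.M, G.d lam = Pi.single i 1 ∧ G.r lam = v

/-- A normalised `𝕋`-valued 2-cocycle on a topological `k`-graph. -/
def TopKGraph.IsCocycle (G : TopKGraph k) (c : G.M → G.M → Circle) : Prop :=
  (∀ lam mu nu, G.s lam = G.r mu → G.s mu = G.r nu →
      c lam mu * c (G.comp lam mu) nu = c lam (G.comp mu nu) * c mu nu) ∧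
  (∀ lam, c lam (G.s lam) = 1) ∧ (∀ lam, c (G.r lam) lam = 1)

/-- A continuous normalised `𝕋`-valued 2-cocycle on a topological `k`-graph:
normalised, satisfies the cocycle identity, and is continuous on the set of
composable pairs. -/
def TopKGraph.IsContinuousCocycle (G : TopKGraph k) (c : G.M → G.M → Circle) : Prop :=
  G.IsCocycle c ∧
    ContinuousOn (fun p : G.M × G.M => c p.1 p.2) {p | G.s p.1 = G.r p.2}
open scoped ENNReal ComplexConjugate

/-- The unique factorisation `lam = p.1 ⬝ p.2` of a path `lam` with `d(p.1) = m`
(meaningful whenever `m ≤ d lam`, by the unique factorisation property); thus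
`(pathFac G m lam).1 = λ(0,m)` and, for `lam ∈ Λ^n`, `(pathFac G m lam).2 = λ(m,n)`. -/
noncomputable def TopKGraph.pathFac (G : TopKGraph k) (m : Fin k → ℕ) (lam : G.M) :
    G.M × G.M :=
  letI := Classical.propDecidable; if h : ∃ p : G.M × G.M, G.s p.1 = G.r p.2 ∧ G.comp p.1 p.2 = lam ∧
      G.d p.1 = m ∧ G.d p.2 = G.d lam - m then h.choose else (lam, lam)

/-- An infinite path in `Λ`: a degree-preserving functor `x : Ω_k → Λ`, recorded
by its segments `x(m,n) ∈ Λ^{n-m}` for `m ≤ n` in `ℕ^k`. -/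
structure TopKGraph.InfPath (G : TopKGraph k) where
  seg : (Fin k → ℕ) → (Fin k → ℕ) → G.M
  d_seg : ∀ {m n : Fin k → ℕ}, m ≤ n → G.d (seg m n) = n - m
  seg_id : ∀ m : Fin k → ℕ, seg m m = G.r (seg m m)
  s_seg : ∀ {m n p : Fin k → ℕ}, m ≤ n → n ≤ p → G.s (seg m n) = G.r (seg n p)
  comp_seg : ∀ {m n p : Fin k → ℕ}, m ≤ n → n ≤ p →
      G.comp (seg m n) (seg n p) = seg m p

/-- The cylinder set `Z(U) = {x ∈ Λ^∞ : x(0,n) ∈ U for some n}`. -/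
def TopKGraph.cyl (G : TopKGraph k) (U : Set G.M) : Set G.InfPath :=
  {x | ∃ n : Fin k → ℕ, x.seg 0 n ∈ U}

/-- The topology on the infinite-path space `Λ^∞` is generated by the cylinder
sets `Z(U)` of open subsets `U` of the `Λ^n`, `n ∈ ℕ^k`. -/
instance TopKGraph.instTopInfPath (G : TopKGraph k) : TopologicalSpace G.InfPath :=
  TopologicalSpace.generateFrom
    {S | ∃ (n : Fin k → ℕ) (U : Set G.M), IsOpen U ∧ (∀ lam ∈ U, G.d lam = n) ∧
      S = G.cyl U}

/-- The shift map `T^p : Λ^∞ → Λ^∞`, `T^p(x)(m,n) = x(m+p, n+p)`. -/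
def TopKGraph.shift (G : TopKGraph k) (p : Fin k → ℕ) (x : G.InfPath) : G.InfPath where
  seg m n := x.seg (m + p) (n + p)
  d_seg := by
    intro m n h
    rw [x.d_seg (add_le_add h le_rfl)]
    funext i
    simp only [Pi.sub_apply, Pi.add_apply]
    omega
  seg_id m := x.seg_id (m + p)
  s_seg := fun h1 h2 => x.s_seg (add_le_add h1 le_rfl) (add_le_add h2 le_rfl)
  comp_seg := fun h1 h2 => x.comp_seg (add_le_add h1 le_rfl) (add_le_add h2 le_rfl)

/-!
A compatible family of initial segments `(x(0,m))_m` determines an infinite path `x`, and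
the topology of `Λ^∞` is the one induced by `x ↦ (x(0,m))_m ∈ ∏_m Λ`. Compatibility is a
closed condition because factorisation `λ ↦ λ(0,m)` is continuous on `Λ^p`, so the image
of `Λ^∞` in the product is closed. For `x ∈ Z(U)` every `x(0,m)` lies in
`r|_{Λ^m}⁻¹(r(U))`, which is compact by properness, and Tychonoff finishes the proof.
-/

open Set Topology

namespace TopKGraph

variable (G : TopKGraph k)

lemma pathFac_spec {m : Fin k → ℕ} {lam : G.M} (h : m ≤ G.d lam) :
    G.s (G.pathFac m lam).1 = G.r (G.pathFac m lam).2 ∧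
    G.comp (G.pathFac m lam).1 (G.pathFac m lam).2 = lam ∧
    G.d (G.pathFac m lam).1 = m ∧ G.d (G.pathFac m lam).2 = G.d lam - m := by
  have hex := (G.factor lam m (G.d lam - m) (add_tsub_cancel_of_le h).symm).exists
  rw [pathFac, dif_pos hex]
  exact hex.choose_spec

lemma pathFac_eq {m : Fin k → ℕ} {lam a b : G.M} (h : m ≤ G.d lam)
    (hab : G.s a = G.r b) (hcomp : G.comp a b = lam) (hda : G.d a = m) :
    G.pathFac m lam = (a, b) := by
  have hdb : G.d b = G.d lam - m := by
    rw [← hcomp, G.d_comp hab, hda, add_tsub_cancel_left]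
  obtain ⟨q, -, huniq⟩ := G.factor lam m (G.d lam - m) (add_tsub_cancel_of_le h).symm
  exact (huniq _ (G.pathFac_spec h)).trans (huniq (a, b) ⟨hab, hcomp, hda, hdb⟩).symm

lemma pathFac_zero (lam : G.M) : G.pathFac 0 lam = (G.r lam, lam) :=
  G.pathFac_eq zero_le (G.sr lam) (G.id_comp lam) (G.d_r lam)

lemma continuousOn_pathFac {m p : Fin k → ℕ} (hmp : m ≤ p) :
    ContinuousOn (G.pathFac m) {lam | G.d lam = p} := by
  rw [continuousOn_iff']
  intro W hW
  refine ⟨(fun q : G.M × G.M => G.comp q.1 q.2) ''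
      ((W ∩ {q | G.d q.1 = m ∧ G.d q.2 = p - m}) ∩ {q | G.s q.1 = G.r q.2}), ?_, ?_⟩
  · exact G.isOpenMap_comp _ (hW.inter (((G.isOpen_deg m).preimage continuous_fst).inter
      ((G.isOpen_deg (p - m)).preimage continuous_snd)))
  ext lam
  simp only [mem_inter_iff, mem_preimage, mem_ofPred_eq, mem_image]
  constructor
  · rintro ⟨hW, hdp⟩
    obtain ⟨hsr, hcomp, hd1, hd2⟩ := G.pathFac_spec (hdp ▸ hmp)
    exact ⟨⟨_, ⟨⟨hW, hd1, hdp ▸ hd2⟩, hsr⟩, hcomp⟩, hdp⟩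
  · rintro ⟨⟨q, ⟨⟨hqW, hdm, -⟩, hsr⟩, hcomp⟩, hdp⟩
    rw [G.pathFac_eq (hdp ▸ hmp) hsr hcomp hdm]
    exact ⟨hqW, hdp⟩

lemma continuous_d : Continuous G.d :=
  continuous_discrete_rng.2 G.isOpen_deg

/-- `f` is the family `(x(0,m))_m` of initial segments of an infinite path `x`
(`range_initSegs`). -/
def IsInitSegFamily (f : (Fin k → ℕ) → G.M) : Prop :=
  ∀ m p, m ≤ p → G.d (f p) = p ∧ (G.pathFac m (f p)).1 = f m

variable {G}

lemma IsInitSegFamily.d_eq {f : (Fin k → ℕ) → G.M} (hf : G.IsInitSegFamily f) (p : Fin k → ℕ) :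
    G.d (f p) = p :=
  (hf p p le_rfl).1

lemma IsInitSegFamily.fst_pathFac {f : (Fin k → ℕ) → G.M} (hf : G.IsInitSegFamily f)
    {m p : Fin k → ℕ} (hmp : m ≤ p) : (G.pathFac m (f p)).1 = f m :=
  (hf m p hmp).2

lemma IsInitSegFamily.pathFac_spec {f : (Fin k → ℕ) → G.M} (hf : G.IsInitSegFamily f)
    {m p : Fin k → ℕ} (hmp : m ≤ p) :
    G.s (f m) = G.r (G.pathFac m (f p)).2 ∧ G.comp (f m) (G.pathFac m (f p)).2 = f p ∧
      G.d (G.pathFac m (f p)).2 = p - m := by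
  obtain ⟨hsr, hcomp, -, hd⟩ := G.pathFac_spec ((hf.d_eq p).symm ▸ hmp)
  rw [hf.fst_pathFac hmp] at hsr hcomp
  rw [hf.d_eq p] at hd
  exact ⟨hsr, hcomp, hd⟩

variable (G)

/-- `x(m,n)` is the tail of `f n` after its initial segment of degree `m`; the `m ⊔ n`
only makes `seg` total. -/
noncomputable def pathOfInitSegs (f : (Fin k → ℕ) → G.M) (hf : G.IsInitSegFamily f) :
    G.InfPath where
  seg m n := (G.pathFac m (f (m ⊔ n))).2
  d_seg {m n} h := by
    rw [sup_eq_right.2 h]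
    exact (hf.pathFac_spec h).2.2
  seg_id m := by
    rw [sup_idem, G.pathFac_eq ((hf.d_eq m).symm ▸ le_rfl) (G.rs _).symm (G.comp_id (f m))
      (hf.d_eq m), G.rs]
  s_seg {m n p} h₁ h₂ := by
    rw [sup_eq_right.2 h₁, sup_eq_right.2 h₂, ← G.s_comp (hf.pathFac_spec h₁).1,
      (hf.pathFac_spec h₁).2.1, (hf.pathFac_spec h₂).1]
  comp_seg {m n p} h₁ h₂ := by
    rw [sup_eq_right.2 h₁, sup_eq_right.2 h₂, sup_eq_right.2 (h₁.trans h₂)]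
    obtain ⟨hsr₁, hcomp₁, -⟩ := hf.pathFac_spec h₁
    obtain ⟨hsr₂, hcomp₂, -⟩ := hf.pathFac_spec h₂
    have hsr : G.s (G.pathFac m (f n)).2 = G.r (G.pathFac n (f p)).2 := by
      rw [← G.s_comp hsr₁, hcomp₁, hsr₂]
    have hfac : G.pathFac m (f p) =
        (f m, G.comp (G.pathFac m (f n)).2 (G.pathFac n (f p)).2) := by
      refine G.pathFac_eq ((hf.d_eq p).symm ▸ h₁.trans h₂) ?_ ?_ (hf.d_eq m)
      · rwa [G.r_comp hsr]
      · rw [← G.comp_assoc hsr₁ hsr, hcomp₁, hcomp₂]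
    rw [hfac]

lemma pathOfInitSegs_seg_zero (f : (Fin k → ℕ) → G.M) (hf : G.IsInitSegFamily f)
    (p : Fin k → ℕ) : (G.pathOfInitSegs f hf).seg 0 p = f p := by
  change (G.pathFac 0 (f (0 ⊔ p))).2 = f p
  rw [sup_eq_right.2 zero_le, G.pathFac_zero]

lemma d_seg_zero (x : G.InfPath) (m : Fin k → ℕ) : G.d (x.seg 0 m) = m := by
  rw [x.d_seg zero_le, tsub_zero]

lemma r_seg_zero (x : G.InfPath) (m : Fin k → ℕ) : G.r (x.seg 0 m) = G.r (x.seg 0 0) := by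
  rw [← x.comp_seg le_rfl (zero_le : 0 ≤ m), G.r_comp (x.s_seg le_rfl zero_le)]

lemma pathFac_seg_zero (x : G.InfPath) {m p : Fin k → ℕ} (hmp : m ≤ p) :
    G.pathFac m (x.seg 0 p) = (x.seg 0 m, x.seg m p) :=
  G.pathFac_eq ((G.d_seg_zero x p).symm ▸ hmp) (x.s_seg zero_le hmp) (x.comp_seg zero_le hmp)
    (G.d_seg_zero x m)

def initSegs (x : G.InfPath) : (Fin k → ℕ) → G.M := fun m => x.seg 0 m

lemma range_initSegs : range G.initSegs = {f | G.IsInitSegFamily f} := by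
  ext f
  constructor
  · rintro ⟨x, rfl⟩ m p hmp
    exact ⟨G.d_seg_zero x p, congrArg Prod.fst (G.pathFac_seg_zero x hmp)⟩
  · intro hf
    exact ⟨G.pathOfInitSegs f hf, funext (G.pathOfInitSegs_seg_zero f hf)⟩

lemma isClosed_setOf_isInitSegFamily : IsClosed {f | G.IsInitSegFamily f} := by
  simp only [IsInitSegFamily, ofPred_forall]
  refine isClosed_iInter fun m => isClosed_iInter fun p => isClosed_iInter fun hmp => ?_
  have hfac : ContinuousOn (fun f : (Fin k → ℕ) → G.M => G.pathFac m (f p))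
      {f | G.d (f p) = p} :=
    (G.continuousOn_pathFac hmp).comp (continuous_apply p).continuousOn fun _ h => h
  exact ((continuous_fst.comp_continuousOn hfac).prodMk (continuous_apply m).continuousOn
    ).preimage_isClosed_of_isClosed
    (isClosed_singleton.preimage (G.continuous_d.comp (continuous_apply p))) isClosed_diagonal

lemma isClosed_range_initSegs : IsClosed (range G.initSegs) :=
  G.range_initSegs ▸ G.isClosed_setOf_isInitSegFamily

lemma cyl_eq_setOf_seg_zero_mem {n : Fin k → ℕ} {V : Set G.M} (hV : ∀ lam ∈ V, G.d lam = n) :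
    G.cyl V = {x | x.seg 0 n ∈ V} := by
  ext x
  refine ⟨fun ⟨m, hm⟩ => ?_, fun h => ⟨n, h⟩⟩
  rwa [← hV _ hm, G.d_seg_zero] at *

lemma continuous_seg_zero (n : Fin k → ℕ) : Continuous fun x : G.InfPath => x.seg 0 n := by
  refine continuous_def.2 fun V hV => ?_
  have hcyl : (fun x : G.InfPath => x.seg 0 n) ⁻¹' V = G.cyl (V ∩ {lam | G.d lam = n}) := by
    rw [G.cyl_eq_setOf_seg_zero_mem fun _ h => h.2]
    ext x
    simp only [mem_preimage, mem_inter_iff, mem_ofPred_eq, d_seg_zero, and_true]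
  rw [hcyl]
  exact TopologicalSpace.isOpen_generateFrom_of_mem
    ⟨n, _, hV.inter (G.isOpen_deg n), fun _ h => h.2, rfl⟩

lemma isInducing_initSegs : IsInducing G.initSegs := by
  refine ⟨le_antisymm (continuous_iff_le_induced.1 (continuous_pi G.continuous_seg_zero))
    (le_generateFrom ?_)⟩
  rintro _ ⟨n, V, hV, hdV, rfl⟩
  rw [G.cyl_eq_setOf_seg_zero_mem hdV]
  exact isOpen_induced (hV.preimage (continuous_apply n))

theorem isCompact_setOf_seg_zero_mem (hP : G.Proper) {n : Fin k → ℕ} {U : Set G.M}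
    (hU : IsCompact U) : IsCompact {x : G.InfPath | x.seg 0 n ∈ U} := by
  set K : (Fin k → ℕ) → Set G.M := fun m => {lam | G.d lam = m ∧ G.r lam ∈ G.r '' U}
  have hK : IsCompact ({f | f n ∈ U} ∩ univ.pi K) :=
    (isCompact_univ_pi fun m => hP m _ (hU.image G.continuous_r)).inter_left
      (hU.isClosed.preimage (continuous_apply n))
  convert G.isInducing_initSegs.isCompact_preimage G.isClosed_range_initSegs hK using 1
  ext x
  refine ⟨fun hx => ⟨hx, fun m _ => ⟨G.d_seg_zero x m, ?_⟩⟩, fun hx => hx.1⟩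
  exact ⟨x.seg 0 n, hx, (G.r_seg_zero x n).trans (G.r_seg_zero x m).symm⟩

end TopKGraph

theorem cyl_compact_of_compact_general {k : ℕ} (G : TopKGraph k)
    (hP : G.Proper) (n : Fin k → ℕ)
    (U : Set G.M) :
    (IsCompact U → IsCompact {x : G.InfPath | x.seg 0 n ∈ U}) ∧
    (IsCompact (closure U) → IsCompact (closure {x : G.InfPath | x.seg 0 n ∈ U})) := by
  refine ⟨G.isCompact_setOf_seg_zero_mem hP, fun hU => ?_⟩
  have hclosed : IsClosed {x : G.InfPath | x.seg 0 n ∈ closure U} :=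
    isClosed_closure.preimage (G.continuous_seg_zero n)
  exact (G.isCompact_setOf_seg_zero_mem hP hU).of_isClosed_subset isClosed_closure
    (closure_minimal (fun _ hx => subset_closure hx) hclosed)

/-- Let `Λ` be a proper, source-free topological `k`-graph and
`U ⊆ Λ^n`.  If `U` is compact then the cylinder set
`Z(U) = {x ∈ Λ^∞ : x(0,n) ∈ U}` is compact, and if `U` is precompact then `Z(U)`
is precompact. -/
theorem cyl_compact_of_compact {k : ℕ} (G : TopKGraph k)
    (hP : G.Proper) (hSF : G.SourceFree) (n : Fin k → ℕ)
    (U : Set G.M) (hU : ∀ lam ∈ U, G.d lam = n) :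
    (IsCompact U → IsCompact {x : G.InfPath | x.seg 0 n ∈ U}) ∧
    (IsCompact (closure U) → IsCompact (closure {x : G.InfPath | x.seg 0 n ∈ U})) :=
  cyl_compact_of_compact_general G hP n U
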